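/- Let d_1, ..., d_n be pairwise coprime positive integers, D their product, and d, m positive integers with d = ∑_j m_j·(D/d_j) where all m_j are nonnegative integers, d divides D, and at least two of the m_j are nonzero. Then a contradiction follows; equivalently, if d > 0 divides D and equals a nonnegative combination ∑_j m_j·(D/d_j), then exactly one m_j is nonzero. -/

import Mathlib

/-!
Write `P j = D / d j`. Modulo `d j` the representation reads `e ≡ m j * P j`, and `P j` is
coprime to `d j`, so `gcd e (d j) ∣ m j`. Since `e ∣ D = d j * P j`, also
`e ∣ gcd e (d j) * P j`. Hence every nonzero term satisfies
`e ≤ gcd e (d j) * P j ≤ m j * P j`, and two nonzero terms would give `e ≥ 2 e`.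
-/

open Finset Function

namespace Nat

variable {ι : Type*} [Fintype ι] [DecidableEq ι] {d : ι → ℕ}

theorem prod_div_eq_prod_erase {j : ι} (hj : d j ≠ 0) :
    (∏ i, d i) / d j = ∏ i ∈ univ.erase j, d i := by
  rw [← mul_prod_erase univ d (mem_univ j), Nat.mul_div_cancel_left _ (Nat.pos_of_ne_zero hj)]

theorem coprime_prod_div_self (hcop : Pairwise (Coprime on d)) {j : ι} (hj : d j ≠ 0) :
    Coprime (d j) ((∏ i, d i) / d j) := by
  rw [prod_div_eq_prod_erase hj]
  exact Coprime.prod_right fun i hi => hcop (ne_of_mem_erase hi).symm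

theorem dvd_prod_div_of_ne {i j : ι} (hij : i ≠ j) (hj : d j ≠ 0) :
    d i ∣ (∏ k, d k) / d j := by
  rw [prod_div_eq_prod_erase hj]
  exact dvd_prod_of_mem d (mem_erase.mpr ⟨hij, mem_univ i⟩)

theorem gcd_dvd_coeff_of_eq_sum (hcop : Pairwise (Coprime on d)) (hD : ∏ i, d i ≠ 0)
    {e : ℕ} {m : ι → ℕ} (hrep : e = ∑ i, m i * ((∏ k, d k) / d i)) (j : ι) :
    gcd e (d j) ∣ m j := by
  have hd : ∀ i, d i ≠ 0 := fun i => prod_ne_zero_iff.mp hD i (mem_univ i)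
  have hsplit : e = m j * ((∏ k, d k) / d j) + ∑ i ∈ univ.erase j, m i * ((∏ k, d k) / d i) := by
    rw [hrep, add_sum_erase univ (fun i => m i * ((∏ k, d k) / d i)) (mem_univ j)]
  have hothers : gcd e (d j) ∣ ∑ i ∈ univ.erase j, m i * ((∏ k, d k) / d i) :=
    dvd_sum fun i hi => (gcd_dvd_right e (d j)).trans <|
      (dvd_prod_div_of_ne (ne_of_mem_erase hi).symm (hd i)).mul_left _
  have hterm : gcd e (d j) ∣ m j * ((∏ k, d k) / d j) :=
    (Nat.dvd_add_iff_left hothers).mpr (hsplit ▸ gcd_dvd_left e (d j))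
  exact (Coprime.coprime_dvd_left (gcd_dvd_right e (d j))
    (coprime_prod_div_self hcop (hd j))).dvd_of_dvd_mul_right hterm

theorem le_mul_prod_div_of_eq_sum (hcop : Pairwise (Coprime on d))
    {e : ℕ} (he : 0 < e) (hdvd : e ∣ ∏ i, d i)
    {m : ι → ℕ} (hrep : e = ∑ i, m i * ((∏ k, d k) / d i)) {j : ι} (hj : m j ≠ 0) :
    e ≤ m j * ((∏ k, d k) / d j) := by
  -- with `D = 0` every cofactor `0 / d i` vanishes, forcing `e = 0`
  have hD : ∏ i, d i ≠ 0 := by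
    rintro hD
    simp only [hD, Nat.zero_div, mul_zero, sum_const_zero] at hrep
    omega
  have hfactor : ∏ i, d i = d j * ((∏ k, d k) / d j) :=
    (Nat.mul_div_cancel' (dvd_prod_of_mem d (mem_univ j))).symm
  have hcofactor : 0 < (∏ k, d k) / d j :=
    Nat.pos_of_ne_zero (right_ne_zero_of_mul (hfactor ▸ hD))
  have hediv : e ∣ gcd e (d j) * ((∏ k, d k) / d j) :=
    dvd_gcd_mul_iff_dvd_mul.mpr (hfactor ▸ hdvd)
  calc e ≤ gcd e (d j) * ((∏ k, d k) / d j) :=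
        le_of_dvd (Nat.mul_pos (gcd_pos_of_pos_left _ he) hcofactor) hediv
    _ ≤ m j * ((∏ k, d k) / d j) :=
        Nat.mul_le_mul_right _ (le_of_dvd (Nat.pos_of_ne_zero hj)
          (gcd_dvd_coeff_of_eq_sum hcop hD hrep j))

end Nat

theorem stmt2_general (n : ℕ) (d : Fin n → ℕ)
    (hcop : ∀ j k : Fin n, j ≠ k → Nat.Coprime (d j) (d k))
    (D : ℕ) (hD : D = ∏ j, d j)
    (e : ℕ) (he : 0 < e) (hdvd : e ∣ D)
    (m : Fin n → ℕ) (hrep : e = ∑ j, m j * (D / d j)) :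
    ∃! j : Fin n, m j ≠ 0 := by
  subst hD
  have hbound := fun j => Nat.le_mul_prod_div_of_eq_sum (j := j) hcop he hdvd hrep
  obtain ⟨j, -, hj⟩ := exists_ne_zero_of_sum_ne_zero (hrep ▸ he.ne')
  refine ⟨j, left_ne_zero_of_mul hj, fun k hk => ?_⟩
  by_contra hkj
  have htwo : m k * ((∏ i, d i) / d k) + m j * ((∏ i, d i) / d j) ≤ e := by
    rw [hrep, ← sum_pair (f := fun i => m i * ((∏ i, d i) / d i)) hkj]
    exact sum_le_sum_of_subset (subset_univ _)
  have hej := hbound j (left_ne_zero_of_mul hj)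
  have hek := hbound k hk
  omega

/-- If a positive divisor `e` of `D` equals a nonnegative combination
`∑ j, m j * (D / d j)`, then exactly one `m j` is nonzero. -/
theorem stmt2 (n : ℕ) (hn : 2 ≤ n) (d : Fin n → ℕ)
    (hpos : ∀ j, 0 < d j)
    (hcop : ∀ j k : Fin n, j ≠ k → Nat.Coprime (d j) (d k))
    (D : ℕ) (hD : D = ∏ j, d j)
    (e : ℕ) (he : 0 < e) (hdvd : e ∣ D)
    (m : Fin n → ℕ) (hrep : e = ∑ j, m j * (D / d j)) :
    ∃! j : Fin n, m j ≠ 0 :=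
  stmt2_general n d hcop D hD e he hdvd m hrep
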